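/- Let F : ℝ^n → ℝ^m be continuously differentiable with compact level set {x ∈ ℝ^n : F_i(x) ≤ F_i(x^0) for all i} for the initial point x^0. Let 0 < a ≤ b, 0 < α_min ≤ α_max, and σ, γ ∈ (0,1). Suppose the sequence {x^k} ⊆ ℝ^n satisfies, for every k ≥ 0: B_k is a symmetric n×n matrix with aI ⪯ B_k ⪯ bI; α^k_i ∈ [α_min, α_max] for all i; d^k ≠ 0 is the unique minimizer over ℝ^n of d ↦ max_{i∈{1,…,m}} ⟨∇F_i(x^k), d⟩/α^k_i + (1/2)‖d‖_{B_k}²; t_k ∈ (0,1] satisfies the Armijo condition at x^k in direction d^k, and either t_k = 1 or the Armijo condition fails at x^k in direction d^k with stepsize t_k/γ for some index i; and x^{k+1} = x^k + t_k d^k. Then {x^k} has at least one accumulation point, and every accumulation point of {x^k} is Pareto critical for F. -/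

import Mathlib

/-
Since `d k` minimises the direction subproblem, `θ_k := max_i ⟪∇F_i(x k), d k⟫ / α_k i` satisfies
`θ_k ≤ -a ‖d k‖² / 2`, and the Armijo step lowers every `F_i` by at least `σ αmin t_k |θ_k|`.
So the iterates stay in the compact level set: this gives an accumulation point, bounded
directions, and `t_k θ_k → 0`. If an accumulation point `x̄` admitted `v` with
`⟪∇F_i(x̄), v⟫ < 0` for all `i`, comparing `d k` with a multiple of `v` in the subproblem would
keep `θ_k ≤ -ε` near `x̄`, forcing `t_k → 0` along the subsequence. Then the backtracking rule
says that the Armijo test fails at the small steps `t_k / γ`, which contradicts the first-order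
expansion of the `C¹` functions `F_i`, uniform near `x̄`.
-/

open scoped RealInnerProductSpace

/-- Maximum of a function over the (nonempty) finite index type `Fin m`. -/
noncomputable def fmax {m : ℕ} [NeZero m] (f : Fin m → ℝ) : ℝ :=
  Finset.univ.sup' Finset.univ_nonempty f

/-- A point `x` is Pareto critical for `F` if there is no direction `d` with
`⟨∇F_i(x), d⟩ < 0` for all `i`. -/
def ParetoCritical {n m : ℕ} (F : Fin m → EuclideanSpace ℝ (Fin n) → ℝ)
    (x : EuclideanSpace ℝ (Fin n)) : Prop :=
  ¬∃ d : EuclideanSpace ℝ (Fin n), ∀ i, ⟪gradient (F i) x, d⟫ < 0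

open Filter Topology

theorem fmax_le_iff {m : ℕ} [NeZero m] (f : Fin m → ℝ) (c : ℝ) :
    fmax f ≤ c ↔ ∀ i, f i ≤ c := by
  simp [fmax, Finset.sup'_le_iff]

theorem le_fmax {m : ℕ} [NeZero m] (f : Fin m → ℝ) (i : Fin m) : f i ≤ fmax f :=
  Finset.le_sup' f (Finset.mem_univ i)


theorem fmax_lt_iff {m : ℕ} [NeZero m] (f : Fin m → ℝ) (c : ℝ) :
    fmax f < c ↔ ∀ i, f i < c := by
  simp [fmax, Finset.sup'_lt_iff]

theorem tendsto_zero_of_le_sub_mul_of_bddBelow {f u : ℕ → ℝ} {c : ℝ} (hc : 0 < c)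
    (hf : BddBelow (Set.range f)) (hu : ∀ k, 0 ≤ u k) (hfu : ∀ k, f (k + 1) ≤ f k - c * u k) :
    Tendsto u atTop (𝓝 0) := by
  have hanti : Antitone f :=
    antitone_nat_of_succ_le fun k => (hfu k).trans (by nlinarith [hu k])
  have hlim := tendsto_atTop_ciInf hanti hf
  have hgap : Tendsto (fun k => (f k - f (k + 1)) / c) atTop (𝓝 0) := by
    simpa using (hlim.sub (hlim.comp (tendsto_add_atTop_nat 1))).div_const c
  refine squeeze_zero hu (fun k => ?_) hgap
  rw [le_div_iff₀ hc]
  linarith [hfu k]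

section Calculus

variable {E : Type*} [NormedAddCommGroup E] [InnerProductSpace ℝ E] [CompleteSpace E]
  {ι : Type*} {l : Filter ι}

theorem ContDiffAt.continuousAt_gradient {f : E → ℝ} {x : E} (hf : ContDiffAt ℝ 1 f x) :
    ContinuousAt (gradient f) x :=
  (InnerProductSpace.toDual ℝ E).symm.continuous.continuousAt.comp
    (hf.continuousAt_fderiv one_ne_zero)

/-- The expansion is uniform in the moving base point `y j`: this is strict differentiability of
`f` at `xa`. -/
theorem ContDiffAt.eventually_sub_le_inner_gradient_add {f : E → ℝ} {xa : E}
    (hf : ContDiffAt ℝ 1 f xa) {y h : ι → E} (hy : Tendsto y l (𝓝 xa))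
    (hh : Tendsto h l (𝓝 0)) {δ : ℝ} (hδ : 0 < δ) :
    ∀ᶠ j in l, f (y j + h j) - f (y j) ≤ ⟪gradient f (y j), h j⟫ + δ * ‖h j‖ := by
  have hstrict := (hasStrictFDerivAt_iff_isLittleO.1 (hf.hasStrictFDerivAt one_ne_zero)).def
    (half_pos hδ)
  have hpair : Tendsto (fun j => (y j + h j, y j)) l (𝓝 (xa, xa)) := by
    simpa using (hy.add hh).prodMk_nhds hy
  have hgrad : ∀ᶠ j in l, ‖fderiv ℝ f (y j) - fderiv ℝ f xa‖ < δ / 2 := by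
    have hlim : Tendsto (fun j => ‖fderiv ℝ f (y j) - fderiv ℝ f xa‖) l (𝓝 0) := by
      simpa using (((hf.continuousAt_fderiv one_ne_zero).tendsto.comp hy).sub_const
        (fderiv ℝ f xa)).norm
    exact hlim.eventually (gt_mem_nhds (half_pos hδ))
  filter_upwards [hpair.eventually hstrict, hgrad] with j hj hgj
  simp only [add_sub_cancel_left] at hj
  have hdiff : fderiv ℝ f xa (h j) - fderiv ℝ f (y j) (h j) ≤ δ / 2 * ‖h j‖ := by
    calc fderiv ℝ f xa (h j) - fderiv ℝ f (y j) (h j)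
        ≤ ‖(fderiv ℝ f (y j) - fderiv ℝ f xa) (h j)‖ := by
          rw [sub_apply, Real.norm_eq_abs, abs_sub_comm]
          exact le_abs_self _
      _ ≤ δ / 2 * ‖h j‖ := ((fderiv ℝ f (y j) - fderiv ℝ f xa).le_opNorm _).trans
          (mul_le_mul_of_nonneg_right hgj.le (norm_nonneg _))
  rw [inner_gradient_left]
  linarith [le_abs_self (f (y j + h j) - f (y j) - fderiv ℝ f xa (h j)), Real.norm_eq_abs
    (f (y j + h j) - f (y j) - fderiv ℝ f xa (h j))]

theorem ContDiffAt.eventually_armijo {f : E → ℝ} {xa : E} (hf : ContDiffAt ℝ 1 f xa)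
    {y d : ι → E} {τ : ι → ℝ} {σ ε : ℝ} (hy : Tendsto y l (𝓝 xa))
    (hd : Bornology.IsBounded (Set.range d)) (hτ : Tendsto τ l (𝓝 0)) (hτ0 : ∀ j, 0 ≤ τ j)
    (hσ : σ < 1) (hε : 0 < ε) (hslope : ∀ᶠ j in l, ⟪gradient f (y j), d j⟫ ≤ -ε) :
    ∀ᶠ j in l, f (y j + τ j • d j) - f (y j) ≤ σ * τ j * ⟪gradient f (y j), d j⟫ := by
  obtain ⟨C, hC, hdC⟩ := hd.exists_pos_norm_le
  have hdC' : ∀ j, ‖d j‖ ≤ C := fun j => hdC _ ⟨j, rfl⟩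
  have hstep : Tendsto (fun j => τ j • d j) l (𝓝 0) := by
    refine squeeze_zero_norm (fun j => ?_) (by simpa using hτ.mul_const C)
    rw [norm_smul, Real.norm_of_nonneg (hτ0 j)]
    exact mul_le_mul_of_nonneg_left (hdC' j) (hτ0 j)
  have hδ : 0 < (1 - σ) * ε / C := by have := sub_pos.2 hσ; positivity
  filter_upwards [hf.eventually_sub_le_inner_gradient_add hy hstep hδ, hslope] with j hj hsj
  have hδd : (1 - σ) * ε / C * ‖d j‖ ≤ (1 - σ) * ε :=
    calc (1 - σ) * ε / C * ‖d j‖ ≤ (1 - σ) * ε / C * C :=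
          mul_le_mul_of_nonneg_left (hdC' j) hδ.le
      _ = (1 - σ) * ε := div_mul_cancel₀ _ hC.ne'
  rw [inner_smul_right, norm_smul, Real.norm_of_nonneg (hτ0 j)] at hj
  nlinarith [mul_le_mul_of_nonneg_left hδd (hτ0 j),
    mul_le_mul_of_nonneg_left hsj (mul_nonneg (sub_pos.2 hσ).le (hτ0 j))]

theorem exists_pos_eventually_forall_inner_gradient_le {m : ℕ} [NeZero m]
    {F : Fin m → E → ℝ} {xa v : E} (hF : ∀ i, ContDiffAt ℝ 1 (F i) xa) {y : ι → E}
    (hy : Tendsto y l (𝓝 xa)) (hv : ∀ i, ⟪gradient (F i) xa, v⟫ < 0) :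
    ∃ c > 0, ∀ᶠ j in l, ∀ i, ⟪gradient (F i) (y j), v⟫ ≤ -c := by
  have hmax : (fmax fun i => ⟪gradient (F i) xa, v⟫) < 0 := (fmax_lt_iff _ _).2 hv
  refine ⟨-(fmax fun i => ⟪gradient (F i) xa, v⟫) / 2, by linarith, eventually_all.2 fun i => ?_⟩
  have hlim := (((hF i).continuousAt_gradient.tendsto.comp hy).inner tendsto_const_nhds :
    Tendsto (fun j => ⟪gradient (F i) (y j), v⟫) l (𝓝 ⟪gradient (F i) xa, v⟫))
  have hlt : ⟪gradient (F i) xa, v⟫ < -(-(fmax fun i => ⟪gradient (F i) xa, v⟫) / 2) := by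
    linarith [le_fmax (fun i => ⟪gradient (F i) xa, v⟫) i]
  exact (hlim.eventually (gt_mem_nhds hlt)).mono fun j hj => hj.le

end Calculus

section Subproblem

variable {E : Type*} [NormedAddCommGroup E] [InnerProductSpace ℝ E] {m : ℕ} [NeZero m]
  {g : Fin m → E} {α : Fin m → ℝ} {Q : E →ₗ[ℝ] E} {d : E}

/-- The max-term of the direction subproblem, `g i` standing for `∇F_i(x)`. -/
noncomputable def maxScaledSlope (g : Fin m → E) (α : Fin m → ℝ) (e : E) : ℝ :=
  fmax fun i => ⟪g i, e⟫ / α i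

theorem maxScaledSlope_zero : maxScaledSlope g α 0 = 0 := by
  simp [maxScaledSlope, fmax]

theorem inner_le_mul_maxScaledSlope {i : Fin m} (hα : 0 < α i) (e : E) :
    ⟪g i, e⟫ ≤ α i * maxScaledSlope g α e := by
  rw [mul_comm, ← div_le_iff₀ hα]
  exact le_fmax (fun i => ⟪g i, e⟫ / α i) i

theorem inner_le_mul_maxScaledSlope_of_le {i : Fin m} {αmin : ℝ} (hαmin : 0 < αmin)
    (hα : αmin ≤ α i) {e : E} (he : maxScaledSlope g α e ≤ 0) :
    ⟪g i, e⟫ ≤ αmin * maxScaledSlope g α e :=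
  (inner_le_mul_maxScaledSlope (hαmin.trans_le hα) e).trans
    (mul_le_mul_of_nonpos_right hα he)

def MinimizesSubproblem (g : Fin m → E) (α : Fin m → ℝ) (Q : E →ₗ[ℝ] E) (d : E) : Prop :=
  ∀ e, maxScaledSlope g α d + ⟪d, Q d⟫ / 2 ≤ maxScaledSlope g α e + ⟪e, Q e⟫ / 2

theorem MinimizesSubproblem.maxScaledSlope_le_neg_mul_sq (hmin : MinimizesSubproblem g α Q d)
    {a : ℝ} (hQd : a * ‖d‖ ^ 2 ≤ ⟪d, Q d⟫) :
    maxScaledSlope g α d ≤ -(a * ‖d‖ ^ 2 / 2) := by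
  have h0 := hmin 0
  rw [maxScaledSlope_zero, inner_zero_left] at h0
  linarith

theorem MinimizesSubproblem.norm_le (hmin : MinimizesSubproblem g α Q d) {a αmin : ℝ}
    (ha : 0 < a) (hQd : a * ‖d‖ ^ 2 ≤ ⟪d, Q d⟫) (hαmin : 0 < αmin) {i : Fin m}
    (hα : αmin ≤ α i) :
    ‖d‖ ≤ 2 * ‖g i‖ / (a * αmin) := by
  have hθ := hmin.maxScaledSlope_le_neg_mul_sq hQd
  have hslope := inner_le_mul_maxScaledSlope_of_le hαmin hα
    (hθ.trans (neg_nonpos.2 (by positivity)))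
  have hcs : -(‖g i‖ * ‖d‖) ≤ ⟪g i, d⟫ := by
    have := real_inner_le_norm (-g i) d
    rw [inner_neg_left, norm_neg] at this
    linarith
  have key : ‖d‖ * (‖d‖ * (a * αmin)) ≤ ‖d‖ * (2 * ‖g i‖) := by
    nlinarith [mul_le_mul_of_nonneg_left hθ hαmin.le]
  rw [le_div_iff₀ (by positivity)]
  rcases (norm_nonneg d).eq_or_lt with hd | hd
  · rw [← hd, zero_mul]; positivity
  · exact le_of_mul_le_mul_left key hd

/-- Comparing `d` with the competitor `s • v`, `s = c / (αmax (M + 1))`, in the subproblem. -/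
theorem MinimizesSubproblem.maxScaledSlope_le_of_forall_inner_le
    (hmin : MinimizesSubproblem g α Q d) (hQ : ∀ u, 0 ≤ ⟪u, Q u⟫) {v : E} {M : ℝ}
    (hQv : ⟪v, Q v⟫ ≤ M) {αmax : ℝ}
    (hα0 : ∀ i, 0 < α i) (hαmax : ∀ i, α i ≤ αmax) {c : ℝ} (hc : 0 ≤ c)
    (hv : ∀ i, ⟪g i, v⟫ ≤ -c) :
    maxScaledSlope g α d ≤ -(c ^ 2 / (2 * αmax ^ 2 * (M + 1))) := by
  have hαmax0 : 0 < αmax := (hα0 0).trans_le (hαmax 0)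
  have hM : 0 ≤ M := (hQ v).trans hQv
  set s := c / (αmax * (M + 1)) with hs
  have hs0 : 0 ≤ s := by positivity
  have hslope : maxScaledSlope g α (s • v) ≤ -(s * c) / αmax := by
    refine (fmax_le_iff _ _).2 fun i => ?_
    rw [inner_smul_right, div_le_iff₀ (hα0 i)]
    have h1 : s * ⟪g i, v⟫ ≤ -(s * c) := by nlinarith [mul_le_mul_of_nonneg_left (hv i) hs0]
    have h2 : -(s * c) ≤ -(s * c) / αmax * α i := by
      have hratio : α i / αmax ≤ 1 := (div_le_one hαmax0).2 (hαmax i)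
      calc -(s * c) ≤ -(s * c) * (α i / αmax) := by nlinarith [mul_nonneg hs0 hc]
        _ = -(s * c) / αmax * α i := by ring
    linarith
  have hquad : ⟪s • v, Q (s • v)⟫ ≤ s * c / αmax := by
    have hsc : s * c / αmax = s * s * (M + 1) := by rw [hs]; field_simp
    rw [map_smul, real_inner_smul_left, real_inner_smul_right, hsc]
    nlinarith [mul_le_mul_of_nonneg_left hQv (mul_nonneg hs0 hs0)]
  calc maxScaledSlope g α d ≤ maxScaledSlope g α d + ⟪d, Q d⟫ / 2 := by linarith [hQ d]
    _ ≤ maxScaledSlope g α (s • v) + ⟪s • v, Q (s • v)⟫ / 2 := hmin (s • v)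
    _ ≤ -(s * c) / αmax + s * c / αmax / 2 := by linarith
    _ = -(c ^ 2 / (2 * αmax ^ 2 * (M + 1))) := by rw [hs]; field_simp; ring

end Subproblem

section Method

variable {E : Type*} [NormedAddCommGroup E] [InnerProductSpace ℝ E] [CompleteSpace E]
  {m : ℕ} [NeZero m]

noncomputable def maxScaledSlopeAt (F : Fin m → E → ℝ) (x : ℕ → E) (α : ℕ → Fin m → ℝ)
    (d : ℕ → E) (k : ℕ) : ℝ :=
  maxScaledSlope (fun i => gradient (F i) (x k)) (α k) (d k)

/-- Iterates of the Barzilai–Borwein (BB) descent method with variable metrics `B k`. -/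
structure IsBBDescentSequence (F : Fin m → E → ℝ) (x : ℕ → E) (a b αmin αmax σ γ : ℝ)
    (B : ℕ → E →ₗ[ℝ] E) (α : ℕ → Fin m → ℝ) (d : ℕ → E) (t : ℕ → ℝ) : Prop where
  pos_a : 0 < a
  pos_αmin : 0 < αmin
  σ_mem : σ ∈ Set.Ioo 0 1
  pos_γ : 0 < γ
  le_inner_metric : ∀ k u, a * ‖u‖ ^ 2 ≤ ⟪u, B k u⟫
  inner_metric_le : ∀ k u, ⟪u, B k u⟫ ≤ b * ‖u‖ ^ 2
  mem_Icc : ∀ k i, α k i ∈ Set.Icc αmin αmax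
  minimizesSubproblem : ∀ k,
    MinimizesSubproblem (fun i => gradient (F i) (x k)) (α k) (B k) (d k)
  pos_step : ∀ k, 0 < t k
  armijo : ∀ k i, F i (x k + t k • d k) - F i (x k) ≤ σ * t k * ⟪gradient (F i) (x k), d k⟫
  backtracking : ∀ k, t k = 1 ∨ ∃ i, σ * (t k / γ) * ⟪gradient (F i) (x k), d k⟫ <
    F i (x k + (t k / γ) • d k) - F i (x k)
  succ_eq : ∀ k, x (k + 1) = x k + t k • d k

namespace IsBBDescentSequence

variable {F : Fin m → E → ℝ} {x : ℕ → E} {a b αmin αmax σ γ : ℝ} {B : ℕ → E →ₗ[ℝ] E}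
  {α : ℕ → Fin m → ℝ} {d : ℕ → E} {t : ℕ → ℝ}

theorem maxScaledSlopeAt_le (h : IsBBDescentSequence F x a b αmin αmax σ γ B α d t) (k : ℕ) :
    maxScaledSlopeAt F x α d k ≤ -(a * ‖d k‖ ^ 2 / 2) :=
  (h.minimizesSubproblem k).maxScaledSlope_le_neg_mul_sq (h.le_inner_metric k _)

theorem maxScaledSlopeAt_nonpos (h : IsBBDescentSequence F x a b αmin αmax σ γ B α d t)
    (k : ℕ) : maxScaledSlopeAt F x α d k ≤ 0 :=
  (h.maxScaledSlopeAt_le k).trans (neg_nonpos.2 (by have := h.pos_a; positivity))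

theorem step_mul_neg_maxScaledSlopeAt_nonneg
    (h : IsBBDescentSequence F x a b αmin αmax σ γ B α d t) (k : ℕ) :
    0 ≤ t k * -maxScaledSlopeAt F x α d k :=
  mul_nonneg (h.pos_step k).le (neg_nonneg.2 (h.maxScaledSlopeAt_nonpos k))

theorem inner_gradient_le (h : IsBBDescentSequence F x a b αmin αmax σ γ B α d t) (k : ℕ)
    (i : Fin m) : ⟪gradient (F i) (x k), d k⟫ ≤ αmin * maxScaledSlopeAt F x α d k :=
  inner_le_mul_maxScaledSlope_of_le (g := fun i => gradient (F i) (x k)) h.pos_αmin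
    (h.mem_Icc k i).1 (h.maxScaledSlopeAt_nonpos k)

theorem apply_succ_le_sub (h : IsBBDescentSequence F x a b αmin αmax σ γ B α d t) (k : ℕ)
    (i : Fin m) :
    F i (x (k + 1)) ≤ F i (x k) - σ * αmin * (t k * -maxScaledSlopeAt F x α d k) := by
  have := mul_le_mul_of_nonneg_left (h.inner_gradient_le k i)
    (mul_nonneg h.σ_mem.1.le (h.pos_step k).le)
  rw [h.succ_eq k]
  linarith [h.armijo k i]

theorem mem_levelSet (h : IsBBDescentSequence F x a b αmin αmax σ γ B α d t) (k : ℕ) :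
    x k ∈ {y | ∀ i, F i y ≤ F i (x 0)} := fun i =>
  antitone_nat_of_succ_le (f := fun k => F i (x k)) (fun k => (h.apply_succ_le_sub k i).trans
    (sub_le_self _ (mul_nonneg (mul_pos h.σ_mem.1 h.pos_αmin).le
      (h.step_mul_neg_maxScaledSlopeAt_nonneg k)))) k.zero_le

theorem isBounded_range_direction (h : IsBBDescentSequence F x a b αmin αmax σ γ B α d t)
    (hF : ContDiff ℝ 1 (F 0)) (hlevel : IsCompact {y | ∀ i, F i y ≤ F i (x 0)}) :
    Bornology.IsBounded (Set.range d) := by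
  obtain ⟨G, hG⟩ := hlevel.exists_bound_of_continuousOn (continuous_iff_continuousAt.2
    fun _ => hF.contDiffAt.continuousAt_gradient).continuousOn
  refine isBounded_iff_forall_norm_le.2 ⟨2 * G / (a * αmin), ?_⟩
  rintro _ ⟨k, rfl⟩
  have ha := h.pos_a
  have hαmin := h.pos_αmin
  exact ((h.minimizesSubproblem k).norm_le ha (h.le_inner_metric k _) hαmin
    (h.mem_Icc k 0).1).trans (by gcongr; exact hG _ (h.mem_levelSet k))

theorem tendsto_step_mul_neg_maxScaledSlopeAt
    (h : IsBBDescentSequence F x a b αmin αmax σ γ B α d t) (hF : Continuous (F 0))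
    (hlevel : IsCompact {y | ∀ i, F i y ≤ F i (x 0)}) :
    Tendsto (fun k => t k * -maxScaledSlopeAt F x α d k) atTop (𝓝 0) :=
  tendsto_zero_of_le_sub_mul_of_bddBelow (f := fun k => F 0 (x k))
    (mul_pos h.σ_mem.1 h.pos_αmin)
    ((hlevel.bddBelow_image hF.continuousOn).mono
      (Set.range_subset_iff.2 fun k => Set.mem_image_of_mem _ (h.mem_levelSet k)))
    h.step_mul_neg_maxScaledSlopeAt_nonneg (fun k => h.apply_succ_le_sub k 0)

theorem exists_pos_eventually_maxScaledSlopeAt_le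
    (h : IsBBDescentSequence F x a b αmin αmax σ γ B α d t) (hF : ∀ i, ContDiff ℝ 1 (F i))
    {φ : ℕ → ℕ} {xa v : E} (hxa : Tendsto (x ∘ φ) atTop (𝓝 xa))
    (hv : ∀ i, ⟪gradient (F i) xa, v⟫ < 0) :
    ∃ ε > 0, ∀ᶠ j in atTop, maxScaledSlopeAt F x α d (φ j) ≤ -ε := by
  obtain ⟨c, hc, hcv⟩ :=
    exists_pos_eventually_forall_inner_gradient_le (fun i => (hF i).contDiffAt) hxa hv
  have ha := h.pos_a
  have hM : 0 ≤ b * ‖v‖ ^ 2 :=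
    (mul_nonneg ha.le (sq_nonneg _)).trans ((h.le_inner_metric 0 v).trans (h.inner_metric_le 0 v))
  have hαmax : 0 < αmax := h.pos_αmin.trans_le ((h.mem_Icc 0 0).1.trans (h.mem_Icc 0 0).2)
  refine ⟨c ^ 2 / (2 * αmax ^ 2 * (b * ‖v‖ ^ 2 + 1)), by positivity, hcv.mono fun j hj => ?_⟩
  exact (h.minimizesSubproblem _).maxScaledSlope_le_of_forall_inner_le
    (fun u => (mul_nonneg ha.le (sq_nonneg _)).trans (h.le_inner_metric _ u))
    (h.inner_metric_le _ v) (fun i => h.pos_αmin.trans_le (h.mem_Icc _ i).1)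
    (fun i => (h.mem_Icc _ i).2) hc.le hj

theorem not_exists_forall_inner_gradient_neg
    (h : IsBBDescentSequence F x a b αmin αmax σ γ B α d t) (hF : ∀ i, ContDiff ℝ 1 (F i))
    (hlevel : IsCompact {y | ∀ i, F i y ≤ F i (x 0)}) {φ : ℕ → ℕ} (hφ : StrictMono φ) {xa : E}
    (hxa : Tendsto (x ∘ φ) atTop (𝓝 xa)) :
    ¬∃ v, ∀ i, ⟪gradient (F i) xa, v⟫ < 0 := by
  rintro ⟨v, hv⟩
  obtain ⟨ε, hε, hθε⟩ := h.exists_pos_eventually_maxScaledSlopeAt_le hF hxa hv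
  have hlim : Tendsto (fun j => t (φ j) * -maxScaledSlopeAt F x α d (φ j) / ε) atTop (𝓝 0) := by
    rw [← zero_div ε]
    exact ((h.tendsto_step_mul_neg_maxScaledSlopeAt (hF 0).continuous hlevel).comp
      hφ.tendsto_atTop).div_const ε
  have htφ : Tendsto (t ∘ φ) atTop (𝓝 0) := by
    refine squeeze_zero' (Eventually.of_forall fun j => (h.pos_step _).le)
      (hθε.mono fun j hj => ?_) hlim
    exact (le_div_iff₀ hε).2 (mul_le_mul_of_nonneg_left (by linarith) (h.pos_step _).le)
  have hArmijo : ∀ᶠ j in atTop, ∀ i,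
      F i (x (φ j) + (t (φ j) / γ) • d (φ j)) - F i (x (φ j)) ≤
        σ * (t (φ j) / γ) * ⟪gradient (F i) (x (φ j)), d (φ j)⟫ :=
    eventually_all.2 fun i => (hF i).contDiffAt.eventually_armijo hxa
      ((h.isBounded_range_direction (hF 0) hlevel).subset (Set.range_comp_subset_range φ d))
      (by simpa using htφ.div_const γ) (fun j => div_nonneg (h.pos_step _).le h.pos_γ.le)
      h.σ_mem.2 (mul_pos h.pos_αmin hε)
      (hθε.mono fun j hj => (h.inner_gradient_le _ i).trans (by nlinarith [h.pos_αmin]))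
  obtain ⟨j, hj, htj⟩ := (hArmijo.and (htφ.eventually (gt_mem_nhds one_pos))).exists
  rcases h.backtracking (φ j) with h1 | ⟨i, hi⟩
  · exact htj.ne h1
  · exact (hi.trans_le (hj i)).false

end IsBBDescentSequence

end Method

theorem stmt12_general {n m : ℕ} [NeZero m] (F : Fin m → EuclideanSpace ℝ (Fin n) → ℝ)
    (hF : ∀ i, ContDiff ℝ 1 (F i))
    (x : ℕ → EuclideanSpace ℝ (Fin n))
    (hlevel : IsCompact {y : EuclideanSpace ℝ (Fin n) | ∀ i, F i y ≤ F i (x 0)})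
    (a b : ℝ) (ha : 0 < a)
    (αmin αmax : ℝ) (hαmin : 0 < αmin)
    (σ γ : ℝ) (hσ : σ ∈ Set.Ioo (0 : ℝ) 1) (hγ : γ ∈ Set.Ioo (0 : ℝ) 1)
    (B : ℕ → EuclideanSpace ℝ (Fin n) →ₗ[ℝ] EuclideanSpace ℝ (Fin n))
    (hBa : ∀ k, ∀ u : EuclideanSpace ℝ (Fin n), a * ‖u‖ ^ 2 ≤ ⟪u, B k u⟫)
    (hBb : ∀ k, ∀ u : EuclideanSpace ℝ (Fin n), ⟪u, B k u⟫ ≤ b * ‖u‖ ^ 2)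
    (α : ℕ → Fin m → ℝ) (hα : ∀ k i, α k i ∈ Set.Icc αmin αmax)
    (d : ℕ → EuclideanSpace ℝ (Fin n))
    (hdmin : ∀ k, ∀ e : EuclideanSpace ℝ (Fin n),
      (fmax fun i => ⟪gradient (F i) (x k), d k⟫ / α k i) + ⟪d k, B k (d k)⟫ / 2 ≤
        (fmax fun i => ⟪gradient (F i) (x k), e⟫ / α k i) + ⟪e, B k e⟫ / 2)
    (t : ℕ → ℝ) (ht : ∀ k, t k ∈ Set.Ioc (0 : ℝ) 1)
    (harmijo : ∀ k i, F i (x k + t k • d k) - F i (x k) ≤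
      σ * t k * ⟪gradient (F i) (x k), d k⟫)
    (hmaximal : ∀ k, t k = 1 ∨ ∃ i,
      σ * (t k / γ) * ⟪gradient (F i) (x k), d k⟫ <
        F i (x k + (t k / γ) • d k) - F i (x k))
    (hstep : ∀ k, x (k + 1) = x k + t k • d k) :
    (∃ xa : EuclideanSpace ℝ (Fin n), ∃ φ : ℕ → ℕ, StrictMono φ ∧
        Filter.Tendsto (x ∘ φ) Filter.atTop (nhds xa)) ∧
      ∀ xa : EuclideanSpace ℝ (Fin n),
        (∃ φ : ℕ → ℕ, StrictMono φ ∧ Filter.Tendsto (x ∘ φ) Filter.atTop (nhds xa)) →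
          ParetoCritical F xa := by
  have h : IsBBDescentSequence F x a b αmin αmax σ γ B α d t :=
    ⟨ha, hαmin, hσ, hγ.1, hBa, hBb, hα, hdmin, fun k => (ht k).1, harmijo, hmaximal, hstep⟩
  refine ⟨?_, fun xa ⟨φ, hφ, hxa⟩ => h.not_exists_forall_inner_gradient_neg hF hlevel hφ hxa⟩
  obtain ⟨xa, -, φ, hφ, hxa⟩ := hlevel.tendsto_subseq h.mem_levelSet
  exact ⟨xa, φ, hφ, hxa⟩

/-- Global convergence of the Barzilai–Borwein descent method with
variable metrics: under a compact level set assumption and uniform bounds on the metrics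
and BB parameters, the iterate sequence has at least one accumulation point, and every
accumulation point is Pareto critical. -/
theorem stmt12 {n m : ℕ} [NeZero m] (F : Fin m → EuclideanSpace ℝ (Fin n) → ℝ)
    (hF : ∀ i, ContDiff ℝ 1 (F i))
    (x : ℕ → EuclideanSpace ℝ (Fin n))
    (hlevel : IsCompact {y : EuclideanSpace ℝ (Fin n) | ∀ i, F i y ≤ F i (x 0)})
    (a b : ℝ) (ha : 0 < a) (hab : a ≤ b)
    (αmin αmax : ℝ) (hαmin : 0 < αmin) (hαmm : αmin ≤ αmax)
    (σ γ : ℝ) (hσ : σ ∈ Set.Ioo (0 : ℝ) 1) (hγ : γ ∈ Set.Ioo (0 : ℝ) 1)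
    (B : ℕ → EuclideanSpace ℝ (Fin n) →ₗ[ℝ] EuclideanSpace ℝ (Fin n))
    (hsym : ∀ k, ∀ u v : EuclideanSpace ℝ (Fin n), ⟪B k u, v⟫ = ⟪u, B k v⟫)
    (hBa : ∀ k, ∀ u : EuclideanSpace ℝ (Fin n), a * ‖u‖ ^ 2 ≤ ⟪u, B k u⟫)
    (hBb : ∀ k, ∀ u : EuclideanSpace ℝ (Fin n), ⟪u, B k u⟫ ≤ b * ‖u‖ ^ 2)
    (α : ℕ → Fin m → ℝ) (hα : ∀ k i, α k i ∈ Set.Icc αmin αmax)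
    (d : ℕ → EuclideanSpace ℝ (Fin n)) (hd0 : ∀ k, d k ≠ 0)
    (hdmin : ∀ k, ∀ e : EuclideanSpace ℝ (Fin n),
      (fmax fun i => ⟪gradient (F i) (x k), d k⟫ / α k i) + ⟪d k, B k (d k)⟫ / 2 ≤
        (fmax fun i => ⟪gradient (F i) (x k), e⟫ / α k i) + ⟪e, B k e⟫ / 2)
    (t : ℕ → ℝ) (ht : ∀ k, t k ∈ Set.Ioc (0 : ℝ) 1)
    (harmijo : ∀ k i, F i (x k + t k • d k) - F i (x k) ≤
      σ * t k * ⟪gradient (F i) (x k), d k⟫)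
    (hmaximal : ∀ k, t k = 1 ∨ ∃ i,
      σ * (t k / γ) * ⟪gradient (F i) (x k), d k⟫ <
        F i (x k + (t k / γ) • d k) - F i (x k))
    (hstep : ∀ k, x (k + 1) = x k + t k • d k) :
    (∃ xa : EuclideanSpace ℝ (Fin n), ∃ φ : ℕ → ℕ, StrictMono φ ∧
        Filter.Tendsto (x ∘ φ) Filter.atTop (nhds xa)) ∧
      ∀ xa : EuclideanSpace ℝ (Fin n),
        (∃ φ : ℕ → ℕ, StrictMono φ ∧ Filter.Tendsto (x ∘ φ) Filter.atTop (nhds xa)) →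
          ParetoCritical F xa :=
  stmt12_general F hF x hlevel a b ha αmin αmax hαmin σ γ hσ hγ B hBa hBb α hα d hdmin t ht harmijo
    hmaximal hstep
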